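/- Let n > k > 0 be integers and let F be a pointwise-increasing family of k-element subsets of [n]. Then U_B(F) = {x ∈ [n] : Alice(F_x^+)} is an upper interval of [n] (i.e., if x ∈ U_B(F) and x ≤ y ≤ n then y ∈ U_B(F)), and L_B(F) = {x ∈ [n] : Alice(F_x^-)} is a lower interval of [n] (i.e., if x ∈ L_B(F) and 1 ≤ y ≤ x then y ∈ L_B(F)). -/

import Mathlib

/-- The board `[n] = {1, …, n}` as a finite set of natural numbers. -/
def board (n : ℕ) : Finset ℕ := Finset.Icc 1 n

/-- The order-preserving relabelling of `[n] \ {x}` onto `[n-1]`: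
elements below `x` are unchanged, elements above `x` drop by one. -/
def stdElt (x r : ℕ) : ℕ := if r < x then r else r - 1

/-- Standardise a set avoiding `x`: relabel it via `stdElt x`. -/
def stdSet (x : ℕ) (S : Finset ℕ) : Finset ℕ := S.image (stdElt x)

/-- The standardised section `F_x^+ = { S \ {x} : x ∈ S ∈ F }`,
viewed as a family of subsets of `[n-1]`. -/
def secPlus (F : Set (Finset ℕ)) (x : ℕ) : Set (Finset ℕ) :=
  {T | ∃ S ∈ F, x ∈ S ∧ T = stdSet x (S.erase x)}

/-- The standardised section `F_x^- = { S ∈ F : x ∉ S }`,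
viewed as a family of subsets of `[n-1]`. -/
def secMinus (F : Set (Finset ℕ)) (x : ℕ) : Set (Finset ℕ) :=
  {T | ∃ S ∈ F, x ∉ S ∧ T = stdSet x S}

mutual
  /-- `AliceWins n k F`: Alice wins her `F`-game, where `F` is a family of
  `k`-subsets of `[n]`.  Terminal games (`k = 0` or `k = n`) are won iff `F`
  is nonempty; otherwise Alice needs a first offer `x` such that Bob wins both
  his `F_x^+`-game and his `F_x^-`-game. -/
  def AliceWins (n k : ℕ) (F : Set (Finset ℕ)) : Prop :=
    if h : k = 0 ∨ n ≤ k then F.Nonempty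
    else ∃ x ∈ board n,
      BobWins (n - 1) (k - 1) (secPlus F x) ∧ BobWins (n - 1) k (secMinus F x)
  termination_by n
  decreasing_by all_goals omega

  /-- `BobWins n k F`: Bob wins his `F`-game, where `F` is a family of
  `k`-subsets of `[n]`.  Terminal games (`k = 0` or `k = n`) are won iff `F`
  is nonempty; otherwise Bob needs, for every first offer `x`, that Alice wins
  her `F_x^+`-game or her `F_x^-`-game. -/
  def BobWins (n k : ℕ) (F : Set (Finset ℕ)) : Prop :=
    if h : k = 0 ∨ n ≤ k then F.Nonempty
    else ∀ x ∈ board n,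
      AliceWins (n - 1) (k - 1) (secPlus F x) ∨ AliceWins (n - 1) k (secMinus F x)
  termination_by n
  decreasing_by all_goals omega
end

/-- `S ⪯ T` in the pointwise order: the increasing enumerations of `S` and `T`
have the same length and are pointwise `≤`. -/
def PointwiseLE (S T : Finset ℕ) : Prop :=
  List.Forall₂ (· ≤ ·) (S.sort (· ≤ ·)) (T.sort (· ≤ ·))

/-- `F` consists of `k`-element subsets of `[n]`. -/
def IsFamilyOn (n k : ℕ) (F : Set (Finset ℕ)) : Prop :=
  ∀ S ∈ F, S ⊆ board n ∧ S.card = k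

/-- `F` is pointwise-increasing as a family of `k`-subsets of `[n]`:
it is upwards closed in the pointwise order. -/
def IsIncreasingFamily (n k : ℕ) (F : Set (Finset ℕ)) : Prop :=
  ∀ S T : Finset ℕ, S ∈ F → T ⊆ board n → T.card = k → PointwiseLE S T → T ∈ F

/-!
Winning is monotone in the family, so it suffices to compare sections. Swapping `x` and `x + 1`
turns a set containing `x` (resp. avoiding `x + 1`) into one containing `x + 1` (resp. avoiding
`x`) with the same standardised section, and never moves an element down. Hence, for an
increasing family, `F_x^+ ⊆ F_{x+1}^+` and `F_{x+1}^- ⊆ F_x^-`.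
-/

open Finset Equiv

lemma secPlus_mono {F G : Set (Finset ℕ)} (h : F ⊆ G) (x : ℕ) : secPlus F x ⊆ secPlus G x :=
  fun _ ⟨S, hS, hxS, hT⟩ => ⟨S, h hS, hxS, hT⟩

lemma secMinus_mono {F G : Set (Finset ℕ)} (h : F ⊆ G) (x : ℕ) : secMinus F x ⊆ secMinus G x :=
  fun _ ⟨S, hS, hxS, hT⟩ => ⟨S, h hS, hxS, hT⟩

lemma aliceWins_mono_and_bobWins_mono (n : ℕ) :
    ∀ k {F G : Set (Finset ℕ)}, F ⊆ G →
      (AliceWins n k F → AliceWins n k G) ∧ (BobWins n k F → BobWins n k G) := by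
  induction n using Nat.strong_induction_on with
  | _ n ih =>
    intro k F G hFG
    constructor
    · rw [AliceWins, AliceWins]
      split_ifs with hterm
      · exact fun hF => hF.mono hFG
      · rintro ⟨x, hx, hplus, hminus⟩
        exact ⟨x, hx, (ih (n - 1) (by omega) _ (secPlus_mono hFG x)).2 hplus,
          (ih (n - 1) (by omega) _ (secMinus_mono hFG x)).2 hminus⟩
    · rw [BobWins, BobWins]
      split_ifs with hterm
      · exact fun hF => hF.mono hFG
      · refine fun h x hx => (h x hx).imp ?_ ?_
        · exact (ih (n - 1) (by omega) _ (secPlus_mono hFG x)).1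
        · exact (ih (n - 1) (by omega) _ (secMinus_mono hFG x)).1

lemma AliceWins.mono {n k : ℕ} {F G : Set (Finset ℕ)} (hFG : F ⊆ G) (h : AliceWins n k F) :
    AliceWins n k G :=
  (aliceWins_mono_and_bobWins_mono n k hFG).1 h

lemma pointwiseLE_map {S : Finset ℕ} {f : ℕ ↪ ℕ} (hf : StrictMonoOn f S)
    (hle : ∀ r ∈ S, r ≤ f r) : PointwiseLE S (S.map f) := by
  unfold PointwiseLE
  rw [← hf.map_finsetSort]
  exact List.forall₂_map_right_iff.2 (List.forall₂_same.2 fun r hr => hle r ((mem_sort _).1 hr))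

lemma map_swap_eq_self {S : Finset ℕ} {a b : ℕ} (h : a ∈ S ↔ b ∈ S) :
    S.map (swap a b).toEmbedding = S := by
  ext r
  rw [mem_map_equiv, symm_swap, swap_apply_def]
  split_ifs with hra hrb <;> simp_all

lemma swap_succ_apply_of_ne {x r : ℕ} (h : r ≠ x + 1) :
    swap x (x + 1) r = if r = x then x + 1 else r := by
  split_ifs with hr
  · rw [hr, swap_apply_left]
  · exact swap_apply_of_ne_of_ne hr h

lemma stdElt_swap_succ {x r : ℕ} (h : r ≠ x) : stdElt (x + 1) (swap x (x + 1) r) = stdElt x r := by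
  obtain rfl | hr := eq_or_ne r (x + 1)
  · simp [stdElt]
  · rw [swap_succ_apply_of_ne hr]
    unfold stdElt
    split_ifs <;> omega

lemma stdSet_map_swap_succ {x : ℕ} {T : Finset ℕ} (h : x ∉ T) :
    stdSet (x + 1) (T.map (swap x (x + 1)).toEmbedding) = stdSet x T := by
  rw [stdSet, stdSet, map_eq_image, image_image]
  exact image_congr fun r hr => stdElt_swap_succ (ne_of_mem_of_not_mem hr h)

section IncreasingFamily

variable {n k : ℕ} {F : Set (Finset ℕ)} (hF : IsFamilyOn n k F) (hinc : IsIncreasingFamily n k F)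
include hF hinc

lemma map_swap_succ_mem {S : Finset ℕ} {x : ℕ} (hS : S ∈ F) (hn : x + 1 ≤ n)
    (h : x + 1 ∈ S → x ∈ S) : S.map (swap x (x + 1)).toEmbedding ∈ F := by
  by_cases hx1 : x + 1 ∈ S
  · rwa [map_swap_eq_self (iff_of_true (h hx1) hx1)]
  obtain ⟨hSb, hSk⟩ := hF S hS
  have hσ : ∀ r ∈ S, swap x (x + 1) r = if r = x then x + 1 else r :=
    fun r hr => swap_succ_apply_of_ne (ne_of_mem_of_not_mem hr hx1)
  refine hinc S _ hS ?_ (by rw [card_map, hSk]) (pointwiseLE_map ?_ ?_)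
  · intro r hr
    obtain ⟨a, ha, rfl⟩ := mem_map.1 hr
    have := mem_Icc.1 (hSb ha)
    simp only [board, mem_Icc, toEmbedding_apply, hσ a ha]
    split_ifs <;> omega
  · intro a ha b hb hab
    simp only [toEmbedding_apply, hσ a ha, hσ b hb]
    have := ne_of_mem_of_not_mem hb hx1
    split_ifs <;> omega
  · intro r hr
    simp only [toEmbedding_apply, hσ r hr]
    split_ifs <;> omega

lemma secPlus_subset_secPlus_succ {x : ℕ} (hn : x + 1 ≤ n) : secPlus F x ⊆ secPlus F (x + 1) := by
  rintro _ ⟨S, hS, hxS, rfl⟩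
  refine ⟨_, map_swap_succ_mem hF hinc hS hn fun _ => hxS, ?_, ?_⟩
  · exact mem_map_equiv.2 (by rwa [symm_swap, swap_apply_right])
  · rw [← stdSet_map_swap_succ (notMem_erase x S), map_erase, toEmbedding_apply, swap_apply_left]

lemma secMinus_succ_subset_secMinus {x : ℕ} (hn : x + 1 ≤ n) :
    secMinus F (x + 1) ⊆ secMinus F x := by
  rintro _ ⟨S, hS, hxS, rfl⟩
  have hx : x ∉ S.map (swap x (x + 1)).toEmbedding := by
    rwa [mem_map_equiv, symm_swap, swap_apply_left]
  refine ⟨_, map_swap_succ_mem hF hinc hS hn fun h => absurd h hxS, hx, ?_⟩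
  rw [← stdSet_map_swap_succ hx, map_map, ← trans_toEmbedding, swap_swap, refl_toEmbedding,
    map_refl]

lemma secPlus_subset_secPlus {x y : ℕ} (hxy : x ≤ y) (hy : y ≤ n) :
    secPlus F x ⊆ secPlus F y := by
  induction y, hxy using Nat.le_induction with
  | base => rfl
  | succ y _ ih => exact (ih (by omega)).trans (secPlus_subset_secPlus_succ hF hinc hy)

lemma secMinus_subset_secMinus {x y : ℕ} (hyx : y ≤ x) (hx : x ≤ n) :
    secMinus F x ⊆ secMinus F y := by
  induction x, hyx using Nat.le_induction with
  | base => rfl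
  | succ x _ ih => exact (secMinus_succ_subset_secMinus hF hinc hx).trans (ih (by omega))

end IncreasingFamily

/-- for an increasing family `F`, the set
`U_B(F) = {x ∈ [n] : Alice(F_x^+)}` is an upper interval of `[n]`, and
`L_B(F) = {x ∈ [n] : Alice(F_x^-)}` is a lower interval of `[n]`. -/
theorem UB_upper_LB_lower (n k : ℕ) (hk : 0 < k) (hkn : k < n)
    (F : Set (Finset ℕ)) (hF : IsFamilyOn n k F)
    (hinc : IsIncreasingFamily n k F) :
    (∀ x y : ℕ, x ∈ board n → y ∈ board n → x ≤ y →
      AliceWins (n - 1) (k - 1) (secPlus F x) → AliceWins (n - 1) (k - 1) (secPlus F y)) ∧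
    (∀ x y : ℕ, x ∈ board n → y ∈ board n → y ≤ x →
      AliceWins (n - 1) k (secMinus F x) → AliceWins (n - 1) k (secMinus F y)) :=
  ⟨fun _ _ _ hy hxy => AliceWins.mono (secPlus_subset_secPlus hF hinc hxy (mem_Icc.1 hy).2),
    fun _ _ hx _ hyx => AliceWins.mono (secMinus_subset_secMinus hF hinc hyx (mem_Icc.1 hx).2)⟩
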